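/- arXiv:2604.06615 — 4 statements merged into one kernel-verified Lean document; each statement's English description precedes it below -/
import Mathlib

section
/- Every Schur polynomial s_λ(x_1, ..., x_n) has a saturated Newton polytope: its support equals the set of integer lattice points of its Newton polytope, which is the λ-permutahedron P_λ. -/
open Finset

/-- The number of cells of the tableau `T` whose entry equals `v`. -/
def contentCount {μ : YoungDiagram} (T : SemistandardYoungTableau μ) (v : ℕ) : ℕ :=
  (μ.cells.filter fun c => T c.1 c.2 = v).card

/-- The Kostka number `K_{lam,mu}`: the number of semistandard Young tableaux of shape
`lam` and content `mu` (entries `0`-based). -/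
noncomputable def kostka (lam : YoungDiagram) (mu : ℕ → ℕ) : ℕ :=
  Set.ncard {T : SemistandardYoungTableau lam | ∀ v : ℕ, contentCount T v = mu v}

/-- The Schur polynomial `s_lam(x_1, …, x_n)`, via its monomial expansion
`s_lam = ∑_α K_{lam,α} x^α` over all exponent vectors `α` of total degree `|lam|`. -/
noncomputable def schur (lam : YoungDiagram) (n : ℕ) : MvPolynomial (Fin n) ℝ :=
  ∑ α ∈ Finset.Nat.antidiagonalTuple n lam.card,
    (kostka lam (fun v => if h : v < n then α ⟨v, h⟩ else 0) : ℝ) •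
      ∏ i, MvPolynomial.X i ^ α i

/-- The permutahedron `P_lam ⊆ ℝ^n`. -/
noncomputable def permutahedron (n : ℕ) (lam : ℕ → ℕ) : Set (Fin n → ℝ) :=
  convexHull ℝ {v | ∃ σ : Equiv.Perm (Fin n), v = fun i => (lam (σ i : ℕ) : ℝ)}

/-- The Newton polytope of a polynomial: the convex hull of its exponent vectors. -/
noncomputable def newtonPolytope {n : ℕ} (f : MvPolynomial (Fin n) ℝ) : Set (Fin n → ℝ) :=
  convexHull ℝ {v | ∃ α ∈ f.support, v = fun i => ((α i : ℕ) : ℝ)}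

/-- `f` has a saturated Newton polytope: the lattice points of `Newton(f)` are
exactly the exponent vectors in the support of `f`. -/
def SNP {n : ℕ} (f : MvPolynomial (Fin n) ℝ) : Prop :=
  ∀ α : Fin n → ℕ,
    ((fun i => (α i : ℝ)) ∈ newtonPolytope f ↔ ∃ β ∈ f.support, ∀ i, β i = α i)

/-!
The coefficient of `x^α` in `s_λ` is the Kostka number `K_{λ,α}`, and `K_{λ,α} ≠ 0` exactly when
`α` is dominated by `λ`. Column strictness bounds the number of entries taken from any `k` values
by the number of cells in the first `k` rows; conversely, a tableau of content `α` is obtained by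
filling a suitable horizontal strip of `λ` with the largest value and recursing on the rest.

By Rado's theorem the dominated vectors are exactly the lattice points of `P_λ`. A point outside
`P_λ` is separated from it by a linear functional; its maximum on `P_λ` is attained at the vertex
ordered like the functional's coefficients, and Abel summation turns the dominance inequalities
into the bound of the functional at the point by that maximum. So the support of `s_λ` is the set
of lattice points of `P_λ`; it contains the vertices of `P_λ`, hence its convex hull is `P_λ`.
-/

section ExtendByZero

variable {M : Type*} [Zero M] {n : ℕ} (α : Fin n → M)

def extendByZero (v : ℕ) : M := if h : v < n then α ⟨v, h⟩ else 0

lemma extendByZero_of_lt {v : ℕ} (h : v < n) : extendByZero α v = α ⟨v, h⟩ :=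
  dif_pos h

@[simp]
lemma extendByZero_val (i : Fin n) : extendByZero α i = α i :=
  extendByZero_of_lt α i.2

lemma extendByZero_of_le {v : ℕ} (h : n ≤ v) : extendByZero α v = 0 :=
  dif_neg h.not_gt

end ExtendByZero

lemma sum_range_extendByZero {M : Type*} [AddCommMonoid M] {n : ℕ} (α : Fin n → M) {m : ℕ}
    (hm : m ≤ n) : ∑ k ∈ range m, extendByZero α k = ∑ i ∈ univ.map (Fin.castLEEmb hm), α i := by
  rw [sum_map, ← Fin.sum_univ_eq_sum_range]
  exact sum_congr rfl fun i _ => extendByZero_of_lt α _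

namespace YoungDiagram

def rowLenSum (μ : YoungDiagram) (k : ℕ) : ℕ := ∑ i ∈ range k, μ.rowLen i

variable (μ : YoungDiagram)

lemma rowLenSum_succ (k : ℕ) : μ.rowLenSum (k + 1) = μ.rowLenSum k + μ.rowLen k :=
  sum_range_succ _ _

lemma rowLenSum_eq_card_filter (k : ℕ) : μ.rowLenSum k = #(μ.cells.filter (·.1 < k)) := by
  rw [card_eq_sum_card_fiberwise (f := Prod.fst) (t := range k) fun c hc => by
    simpa using (mem_filter.1 hc).2]
  refine sum_congr rfl fun i hi => ?_
  rw [rowLen_eq_card, row, filter_filter]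
  congr 1
  exact filter_congr fun c _ => by grind

lemma rowLenSum_eq_card {N : ℕ} (h : ∀ i, N ≤ i → μ.rowLen i = 0) : μ.rowLenSum N = μ.card := by
  rw [rowLenSum_eq_card_filter, filter_true_of_mem]
  intro c hc
  by_contra! hN
  have hc' : c.2 < μ.rowLen c.1 := mem_iff_lt_rowLen.1 hc
  rw [h _ hN] at hc'
  exact Nat.not_lt_zero _ hc'

lemma rowLen_eq_zero_of_colLen_le {i : ℕ} (h : μ.colLen 0 ≤ i) : μ.rowLen i = 0 := by
  by_contra h0
  have := mem_iff_lt_colLen.1 (mem_iff_lt_rowLen.2 (Nat.pos_of_ne_zero h0))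
  omega

lemma card_filter_col_fst_lt (j k : ℕ) : #((μ.col j).filter (·.1 < k)) = min (μ.colLen j) k := by
  rw [col_eq_prod, filter_product_left fun i => i < k, card_product, card_singleton, mul_one,
    show (range (μ.colLen j)).filter (· < k) = range (min (μ.colLen j) k) by ext; simp,
    card_range]

/-- The dominance order in subset form: comparing `∑ i ∈ S, α i` over all `#S`-subsets is the
same as comparing the partial sums of the decreasing rearrangement of `α` with those of `μ`. -/
def Dominates {n : ℕ} (α : Fin n → ℕ) : Prop :=
  (∀ S : Finset (Fin n), ∑ i ∈ S, α i ≤ μ.rowLenSum #S) ∧ ∑ i, α i = μ.card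

end YoungDiagram

namespace SemistandardYoungTableau

open YoungDiagram

variable {μ : YoungDiagram} (T : SemistandardYoungTableau μ)

lemma lt_of_contentCount_eq_zero {n : ℕ} (hT : ∀ v, n ≤ v → contentCount T v = 0) {i j : ℕ}
    (hij : (i, j) ∈ μ) : T i j < n := by
  by_contra! h
  have := hT _ h
  rw [contentCount, card_eq_zero, filter_eq_empty_iff] at this
  exact this hij rfl

lemma sum_contentCount (V : Finset ℕ) :
    ∑ v ∈ V, contentCount T v = #(μ.cells.filter fun c => T c.1 c.2 ∈ V) := by
  rw [card_eq_sum_card_fiberwise (s := μ.cells.filter fun c => T c.1 c.2 ∈ V)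
    (f := fun c => T c.1 c.2) (t := V) fun c hc => (mem_filter.1 hc).2]
  refine sum_congr rfl fun v hv => ?_
  rw [contentCount, filter_filter]
  exact congrArg card (filter_congr fun c _ => by grind)

lemma card_filter_col_mem_le (V : Finset ℕ) (j : ℕ) :
    #((μ.col j).filter fun c => T c.1 c.2 ∈ V) ≤ min (μ.colLen j) #V := by
  refine le_min ((card_filter_le _ _).trans (colLen_eq_card μ).ge) ?_
  refine card_le_card_of_injOn (fun c => T c.1 c.2) (fun c hc => (mem_filter.1 hc).2) ?_
  rintro ⟨a, j₁⟩ hc ⟨b, j₂⟩ hd (hT : T a j₁ = T b j₂)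
  simp only [coe_filter, mem_col_iff, Set.mem_ofPred_eq] at hc hd
  obtain ⟨⟨ha, rfl⟩, -⟩ := hc
  obtain ⟨⟨hb, rfl⟩, -⟩ := hd
  rcases lt_trichotomy a b with h | rfl | h
  · exact absurd hT (T.col_strict h hb).ne
  · rfl
  · exact absurd hT (T.col_strict h ha).ne'

lemma card_filter_mem_le_rowLenSum (V : Finset ℕ) :
    #(μ.cells.filter fun c => T c.1 c.2 ∈ V) ≤ μ.rowLenSum #V := by
  have hcol : ∀ c ∈ μ.cells, c.2 ∈ range (μ.rowLen 0) := fun c hc =>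
    mem_range.2 (mem_iff_lt_rowLen.1 (μ.up_left_mem (Nat.zero_le c.1) le_rfl hc))
  rw [rowLenSum_eq_card_filter,
    card_eq_sum_card_fiberwise (f := Prod.snd) (t := range (μ.rowLen 0))
      fun c hc => hcol c (mem_filter.1 hc).1,
    card_eq_sum_card_fiberwise (f := Prod.snd) (t := range (μ.rowLen 0))
      fun c hc => hcol c (mem_filter.1 hc).1]
  refine sum_le_sum fun j _ => ?_
  rw [filter_comm, filter_comm (p := fun c : ℕ × ℕ => c.1 < #V), ← col, card_filter_col_fst_lt]
  exact T.card_filter_col_mem_le V j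

theorem dominates_of_contentCount {n : ℕ} {α : Fin n → ℕ}
    (hT : ∀ v, contentCount T v = extendByZero α v) : μ.Dominates α := by
  have hlt : ∀ i j, (i, j) ∈ μ → T i j < n := fun i j =>
    T.lt_of_contentCount_eq_zero fun v hv => (hT v).trans (extendByZero_of_le α hv)
  have hsum : ∀ S : Finset (Fin n),
      ∑ i ∈ S, α i = ∑ v ∈ S.map Fin.valEmbedding, contentCount T v := fun S => by simp [hT]
  refine ⟨fun S => ?_, ?_⟩
  · rw [hsum, sum_contentCount, ← card_map Fin.valEmbedding]
    exact T.card_filter_mem_le_rowLenSum _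
  · rw [hsum, sum_contentCount, filter_true_of_mem]
    rintro ⟨i, j⟩ hc
    simpa using hlt i j hc

end SemistandardYoungTableau

namespace YoungDiagram

variable (μ : YoungDiagram) (c : ℕ)

/-- Row `i` loses `min (μ.rowLen i) c - min (μ.rowLen (i + 1)) c` cells, all outside the next row,
so the removed cells form a horizontal strip, of `c` cells when `c ≤ μ.rowLen 0`. -/
def removeStrip : YoungDiagram where
  cells := μ.cells.filter fun p => p.2 < μ.rowLen p.1 - c + min (μ.rowLen (p.1 + 1)) c
  isLowerSet := by
    have hanti : Antitone fun i => μ.rowLen i - c + min (μ.rowLen (i + 1)) c :=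
      antitone_nat_of_succ_le fun i => by
        have := μ.rowLen_anti i (i + 1); have := μ.rowLen_anti (i + 1) (i + 1 + 1); omega
    intro q p hpq hq
    simp only [coe_filter, Set.mem_ofPred_eq, mem_cells] at hq ⊢
    exact ⟨μ.isLowerSet hpq hq.1, hpq.2.trans_lt (hq.2.trans_le (hanti hpq.1))⟩

variable {μ c}

lemma mem_removeStrip {i j : ℕ} :
    (i, j) ∈ μ.removeStrip c ↔ j < μ.rowLen i - c + min (μ.rowLen (i + 1)) c := by
  change (i, j) ∈ μ.cells.filter _ ↔ _
  rw [mem_filter, mem_cells, mem_iff_lt_rowLen]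
  dsimp only
  have := μ.rowLen_anti i (i + 1)
  omega

variable (μ c)

lemma rowLen_removeStrip (i : ℕ) :
    (μ.removeStrip c).rowLen i = μ.rowLen i - c + min (μ.rowLen (i + 1)) c :=
  eq_of_forall_lt_iff fun j => by rw [← mem_iff_lt_rowLen, mem_removeStrip]

lemma removeStrip_le : μ.removeStrip c ≤ μ :=
  filter_subset _ _

lemma mem_removeStrip_of_succ_mem {i j : ℕ} (h : (i + 1, j) ∈ μ) : (i, j) ∈ μ.removeStrip c := by
  rw [mem_removeStrip]
  rw [mem_iff_lt_rowLen] at h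
  have := μ.rowLen_anti i (i + 1)
  omega

variable {μ c}

lemma rowLenSum_removeStrip (hc : c ≤ μ.rowLen 0) (k : ℕ) :
    (μ.removeStrip c).rowLenSum k + c = μ.rowLenSum k + min (μ.rowLen k) c := by
  induction k with
  | zero => simp [rowLenSum, hc]
  | succ k ih =>
    rw [rowLenSum_succ, rowLenSum_succ, rowLen_removeStrip]
    omega

lemma card_removeStrip (hc : c ≤ μ.rowLen 0) : (μ.removeStrip c).card + c = μ.card := by
  have hzero : ∀ i, μ.colLen 0 ≤ i → μ.rowLen i = 0 := fun i => μ.rowLen_eq_zero_of_colLen_le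
  have hzero' : ∀ i, μ.colLen 0 ≤ i → (μ.removeStrip c).rowLen i = 0 := fun i hi => by
    rw [rowLen_removeStrip, hzero i hi, hzero (i + 1) (by omega)]
    simp
  have := rowLenSum_removeStrip hc (μ.colLen 0)
  rwa [rowLenSum_eq_card _ hzero, rowLenSum_eq_card _ hzero', hzero _ le_rfl, Nat.zero_min,
    add_zero] at this

end YoungDiagram

namespace SemistandardYoungTableau

variable {μ lam : YoungDiagram} (T : SemistandardYoungTableau μ)

def extendStrip (hle : μ ≤ lam) (hstrip : ∀ i j, (i + 1, j) ∈ lam → (i, j) ∈ μ) (n : ℕ)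
    (hT : ∀ i j, (i, j) ∈ μ → T i j < n) : SemistandardYoungTableau lam where
  entry i j := if (i, j) ∈ μ then T i j else if (i, j) ∈ lam then n else 0
  row_weak' {i j₁ j₂} hj h₂ := by
    have h₁ : (i, j₁) ∈ lam := lam.up_left_mem le_rfl hj.le h₂
    by_cases hμ₂ : (i, j₂) ∈ μ
    · simp [μ.up_left_mem le_rfl hj.le hμ₂, hμ₂, T.row_weak hj hμ₂]
    · by_cases hμ₁ : (i, j₁) ∈ μ
      · simp [hμ₁, hμ₂, h₂, (hT _ _ hμ₁).le]
      · simp [hμ₁, hμ₂, h₁, h₂]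
  col_strict' {i₁ i₂ j} hi h₂ := by
    by_cases hμ₂ : (i₂, j) ∈ μ
    · simp [μ.up_left_mem hi.le le_rfl hμ₂, hμ₂, T.col_strict hi hμ₂]
    · have hμ₁ : (i₁, j) ∈ μ := hstrip _ _ (lam.up_left_mem hi le_rfl h₂)
      simp [hμ₁, hμ₂, h₂, hT _ _ hμ₁]
  zeros' {i j} h := by simp [h, show (i, j) ∉ μ from fun hμ => h (hle hμ)]

@[simp]
lemma extendStrip_apply (hle : μ ≤ lam) (hstrip : ∀ i j, (i + 1, j) ∈ lam → (i, j) ∈ μ) (n : ℕ)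
    (hT : ∀ i j, (i, j) ∈ μ → T i j < n) (i j : ℕ) :
    T.extendStrip hle hstrip n hT i j =
      if (i, j) ∈ μ then T i j else if (i, j) ∈ lam then n else 0 :=
  rfl

lemma contentCount_extendStrip (hle : μ ≤ lam) (hstrip : ∀ i j, (i + 1, j) ∈ lam → (i, j) ∈ μ)
    (n : ℕ) (hT : ∀ i j, (i, j) ∈ μ → T i j < n) (v : ℕ) :
    contentCount (T.extendStrip hle hstrip n hT) v =
      contentCount T v + if v = n then lam.card - μ.card else 0 := by
  have hsub : μ.cells ⊆ lam.cells := hle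
  rw [contentCount, ← union_sdiff_of_subset hsub, filter_union,
    card_union_of_disjoint (disjoint_filter_filter disjoint_sdiff), contentCount]
  congr 1
  · refine congrArg card (filter_congr fun p hp => ?_)
    simp [show (p.1, p.2) ∈ μ from hp]
  · have hstripVal : ∀ p ∈ lam.cells \ μ.cells, T.extendStrip hle hstrip n hT p.1 p.2 = n := by
      intro p hp
      rw [mem_sdiff] at hp
      simp [show (p.1, p.2) ∉ μ from hp.2, show (p.1, p.2) ∈ lam from hp.1]
    split_ifs with hv
    · rw [filter_true_of_mem fun p hp => (hstripVal p hp).trans hv.symm,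
        card_sdiff_of_subset hsub]
    · exact card_eq_zero.2 <|
        filter_false_of_mem fun p hp => (hstripVal p hp).trans_ne (Ne.symm hv)

end SemistandardYoungTableau

lemma extendByZero_castSucc_add {n : ℕ} (α : Fin (n + 1) → ℕ) (v : ℕ) :
    extendByZero (fun i => α i.castSucc) v + (if v = n then α (Fin.last n) else 0) =
      extendByZero α v := by
  rcases lt_trichotomy v n with h | rfl | h
  · simp [extendByZero, h, h.ne, Nat.lt_succ_of_lt h]
  · simp [extendByZero, Fin.last]
  · simp [extendByZero, h.ne', h.not_ge, not_lt.2 h.le]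

namespace YoungDiagram.Dominates

variable {μ : YoungDiagram}

lemma last_le_rowLen_zero {n : ℕ} {α : Fin (n + 1) → ℕ} (hα : μ.Dominates α) :
    α (Fin.last n) ≤ μ.rowLen 0 := by
  simpa [rowLenSum] using hα.1 {Fin.last n}

lemma removeStrip {n : ℕ} {α : Fin (n + 1) → ℕ} (hα : μ.Dominates α) :
    (μ.removeStrip (α (Fin.last n))).Dominates fun i => α i.castSucc := by
  have hc := hα.last_le_rowLen_zero
  refine ⟨fun S => ?_, ?_⟩ <;> dsimp only
  · have hlast : Fin.last n ∉ S.map Fin.castSuccEmb := by simp [Fin.castSucc_ne_last]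
    have h₁ := hα.1 (S.map Fin.castSuccEmb)
    have h₂ := hα.1 (insert (Fin.last n) (S.map Fin.castSuccEmb))
    rw [sum_insert hlast, card_insert_of_notMem hlast, rowLenSum_succ] at h₂
    simp only [sum_map, card_map, Fin.coe_castSuccEmb] at h₁ h₂
    have := rowLenSum_removeStrip hc #S
    omega
  · have := card_removeStrip hc
    have := hα.2
    rw [Fin.sum_univ_castSucc] at this
    omega

theorem exists_tableau : ∀ {n : ℕ} {μ : YoungDiagram} {α : Fin n → ℕ}, μ.Dominates α →
    ∃ T : SemistandardYoungTableau μ, ∀ v, contentCount T v = extendByZero α v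
  | 0, μ, α, hα => by
    have hμ : μ.cells = ∅ := card_eq_zero.1 (by simpa using hα.2.symm)
    refine ⟨SemistandardYoungTableau.highestWeight μ, fun v => ?_⟩
    simp [contentCount, hμ, extendByZero]
  | n + 1, μ, α, hα => by
    have hc := hα.last_le_rowLen_zero
    obtain ⟨T, hT⟩ := hα.removeStrip.exists_tableau
    have hT_lt : ∀ i j, (i, j) ∈ μ.removeStrip (α (Fin.last n)) → T i j < n := fun i j =>
      T.lt_of_contentCount_eq_zero fun v hv => (hT v).trans (extendByZero_of_le _ hv)
    refine ⟨T.extendStrip (μ.removeStrip_le _) (fun i j => μ.mem_removeStrip_of_succ_mem _) n hT_lt,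
      fun v => ?_⟩
    rw [SemistandardYoungTableau.contentCount_extendStrip, hT, ← card_removeStrip hc,
      Nat.add_sub_cancel_left, extendByZero_castSucc_add]

end YoungDiagram.Dominates

lemma SemistandardYoungTableau.finite_setOf_contentCount_eq (μ : YoungDiagram) {n : ℕ}
    {m : ℕ → ℕ} (hm : ∀ v, n ≤ v → m v = 0) :
    {T : SemistandardYoungTableau μ | ∀ v, contentCount T v = m v}.Finite := by
  let f : SemistandardYoungTableau μ → μ.cells → ℕ := fun T c => T c.1.1 c.1.2
  have hf : Function.Injective f := fun T T' h => SemistandardYoungTableau.ext fun i j => by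
    by_cases hij : (i, j) ∈ μ
    · exact congrFun h ⟨(i, j), hij⟩
    · rw [T.zeros hij, T'.zeros hij]
  refine ((Set.Finite.pi fun _ => Set.finite_Iio n).preimage hf.injOn).subset fun T hT => ?_
  simp only [Set.mem_preimage, Set.mem_pi, Set.mem_univ, Set.mem_Iio, forall_const]
  exact fun c => T.lt_of_contentCount_eq_zero (fun v hv => (hT v).trans (hm v hv)) c.2

lemma kostka_extendByZero_ne_zero_iff (μ : YoungDiagram) {n : ℕ} (α : Fin n → ℕ) :
    kostka μ (extendByZero α) ≠ 0 ↔ μ.Dominates α := by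
  refine ⟨fun h => ?_, fun hα => ?_⟩
  · obtain ⟨T, hT⟩ := Set.nonempty_of_ncard_ne_zero h
    exact T.dominates_of_contentCount hT
  · obtain ⟨T, hT⟩ := hα.exists_tableau
    exact ((Set.ncard_pos (SemistandardYoungTableau.finite_setOf_contentCount_eq μ
      fun v => extendByZero_of_le α)).2 ⟨T, hT⟩).ne'

open MvPolynomial in
lemma coeff_schur (μ : YoungDiagram) (n : ℕ) (m : Fin n →₀ ℕ) :
    (schur μ n).coeff m =
      if ∑ i, m i = μ.card then (kostka μ (extendByZero m) : ℝ) else 0 := by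
  have hmon : ∀ α : Fin n → ℕ, ∏ i, (X i : MvPolynomial (Fin n) ℝ) ^ α i =
      monomial (Finsupp.equivFunOnFinite.symm α) 1 := by
    intro α
    rw [monomial_eq, C_1, one_mul, Finsupp.prod_fintype _ _ fun _ => pow_zero _]
    rfl
  simp only [schur, coeff_sum, coeff_smul, hmon, coeff_monomial, Equiv.symm_apply_eq,
    smul_eq_mul, mul_ite, mul_one, mul_zero]
  rw [sum_ite_eq']
  exact if_congr Finset.Nat.mem_antidiagonalTuple rfl rfl

lemma mem_support_schur_iff (μ : YoungDiagram) (n : ℕ) (m : Fin n →₀ ℕ) :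
    m ∈ (schur μ n).support ↔ μ.Dominates m := by
  rw [MvPolynomial.mem_support_iff, coeff_schur]
  by_cases h : ∑ i, m i = μ.card
  · rw [if_pos h, Nat.cast_ne_zero, kostka_extendByZero_ne_zero_iff]
  · rw [if_neg h]
    exact iff_of_false (not_not.2 rfl) fun hm => h hm.2

lemma Finset.sum_le_sum_range_card {M : Type*} [AddCommMonoid M] [PartialOrder M]
    [IsOrderedAddMonoid M] {f : ℕ → M} (hf : Antitone f) (s : Finset ℕ) :
    ∑ i ∈ s, f i ≤ ∑ i ∈ range #s, f i := by
  induction s using Finset.induction_on_max with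
  | empty => simp
  | insert a s has ih =>
    have hcard : #s ≤ a := by
      simpa using card_le_card (fun x hx => mem_range.2 (has x hx) : s ⊆ range a)
    have ha : a ∉ s := fun h => lt_irrefl a (has a h)
    rw [sum_insert ha, card_insert_of_notMem ha, sum_range_succ, add_comm]
    exact add_le_add ih (hf hcard)

lemma Finset.sum_le_sum_range_card_of_injective {M : Type*} [AddCommMonoid M] [PartialOrder M]
    [IsOrderedAddMonoid M] {f : ℕ → M} (hf : Antitone f) {ι : Type*} {g : ι → ℕ}
    (hg : Function.Injective g) (s : Finset ι) : ∑ i ∈ s, f (g i) ≤ ∑ k ∈ range #s, f k := by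
  simpa [sum_map, card_map] using sum_le_sum_range_card hf (s.map ⟨g, hg⟩)

lemma sum_mul_le_sum_mul_of_sum_range_le {d a b : ℕ → ℝ} {n : ℕ}
    (hd : ∀ k, k + 1 < n → d (k + 1) ≤ d k)
    (hab : ∀ m < n, ∑ k ∈ range m, a k ≤ ∑ k ∈ range m, b k)
    (hn : ∑ k ∈ range n, a k = ∑ k ∈ range n, b k) :
    ∑ k ∈ range n, d k * a k ≤ ∑ k ∈ range n, d k * b k := by
  have hparts := sum_range_by_parts d (b - a) n
  have hG : ∑ k ∈ range n, (b - a) k = 0 := by simp [sum_sub_distrib, hn]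
  rw [hG, smul_zero, zero_sub] at hparts
  refine sub_nonneg.1 ?_
  calc 0 ≤ -∑ k ∈ range (n - 1), (d (k + 1) - d k) • ∑ j ∈ range (k + 1), (b - a) j :=
        neg_nonneg.2 <| sum_nonpos fun k hk => by
          rw [mem_range] at hk
          simp only [Pi.sub_apply, sum_sub_distrib, smul_eq_mul]
          exact mul_nonpos_of_nonpos_of_nonneg (by linarith [hd k (by omega)])
            (sub_nonneg.2 (hab _ (by omega)))
    _ = ∑ k ∈ range n, d k • (b - a) k := hparts.symm
    _ = _ := by simp [mul_sub, sum_sub_distrib]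

section Permutahedron

variable {n : ℕ} {lam : ℕ → ℕ}

lemma isLinearMap_sum_apply {ι : Type*} (S : Finset ι) :
    IsLinearMap ℝ fun x : ι → ℝ => ∑ i ∈ S, x i :=
  ⟨fun _ _ => sum_add_distrib, fun _ _ => (mul_sum _ _ _).symm⟩

lemma forall_sum_le_of_mem_permutahedron (hlam : Antitone lam) {x : Fin n → ℝ}
    (hx : x ∈ permutahedron n lam) :
    (∀ S : Finset (Fin n), ∑ i ∈ S, x i ≤ ∑ k ∈ range #S, (lam k : ℝ)) ∧
      ∑ i, x i = ∑ k ∈ range n, (lam k : ℝ) := by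
  have hlamℝ : Antitone fun k => (lam k : ℝ) := fun a b h => Nat.cast_le.2 (hlam h)
  have hconvex := (convex_iInter fun S : Finset (Fin n) => convex_halfSpace_le
    (isLinearMap_sum_apply S) (∑ k ∈ range #S, (lam k : ℝ))).inter
    (convex_hyperplane (isLinearMap_sum_apply univ) (∑ k ∈ range n, (lam k : ℝ)))
  have hmem := convexHull_min ?_ hconvex hx
  · exact ⟨Set.mem_iInter.1 hmem.1, hmem.2⟩
  rintro _ ⟨σ, rfl⟩
  refine ⟨Set.mem_iInter.2 fun S => sum_le_sum_range_card_of_injective hlamℝ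
    (Fin.val_injective.comp σ.injective) S, ?_⟩
  simp only [Set.mem_ofPred_eq]
  rw [Equiv.sum_comp σ fun i => (lam i : ℝ), Fin.sum_univ_eq_sum_range (fun k => (lam k : ℝ))]

lemma sum_mul_le_sum_mul_of_forall_sum_le {c x : Fin n → ℝ} {τ : Equiv.Perm (Fin n)}
    (hτ : Antitone (c ∘ τ))
    (hS : ∀ S : Finset (Fin n), ∑ i ∈ S, x i ≤ ∑ k ∈ range #S, (lam k : ℝ))
    (htot : ∑ i, x i = ∑ k ∈ range n, (lam k : ℝ)) :
    ∑ i, c i * x i ≤ ∑ i, c i * lam (τ.symm i) := by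
  have hsum : ∀ y : Fin n → ℝ, ∑ i, c i * y i =
      ∑ k ∈ range n, extendByZero (c ∘ τ) k * extendByZero (y ∘ τ) k := fun y => by
    rw [← Equiv.sum_comp τ, ← Fin.sum_univ_eq_sum_range]
    simp
  have hlam : ∀ m ≤ n,
      ∑ k ∈ range m, extendByZero ((fun i => (lam (τ.symm i) : ℝ)) ∘ τ) k =
        ∑ k ∈ range m, (lam k : ℝ) := fun m hm =>
    sum_congr rfl fun k hk => by simp [extendByZero_of_lt _ ((mem_range.1 hk).trans_le hm)]
  have hx : ∀ m (hm : m ≤ n), ∃ S : Finset (Fin n), #S = m ∧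
      ∑ k ∈ range m, extendByZero (x ∘ τ) k = ∑ i ∈ S, x i := fun m hm =>
    ⟨(univ.map (Fin.castLEEmb hm)).map τ.toEmbedding, by simp, by
      rw [sum_range_extendByZero _ hm, sum_map (f := x)]; rfl⟩
  rw [hsum, hsum]
  refine sum_mul_le_sum_mul_of_sum_range_le (fun k hk => ?_) (fun m hm => ?_) ?_
  · rw [extendByZero_of_lt _ hk, extendByZero_of_lt _ (by omega)]
    exact hτ (Fin.mk_le_mk.2 k.le_succ)
  · obtain ⟨S, rfl, hS'⟩ := hx m hm.le
    rw [hS', hlam _ hm.le]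
    exact hS S
  · obtain ⟨S, hSn, hS'⟩ := hx n le_rfl
    rw [hS', hlam _ le_rfl, eq_univ_of_card S (by simpa using hSn), htot]

lemma mem_permutahedron_of_forall_sum_le {x : Fin n → ℝ}
    (hS : ∀ S : Finset (Fin n), ∑ i ∈ S, x i ≤ ∑ k ∈ range #S, (lam k : ℝ))
    (htot : ∑ i, x i = ∑ k ∈ range n, (lam k : ℝ)) : x ∈ permutahedron n lam := by
  by_contra hx
  have hfin : {v : Fin n → ℝ | ∃ σ : Equiv.Perm (Fin n), v = fun i => (lam (σ i) : ℝ)}.Finite :=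
    (Set.finite_range fun σ : Equiv.Perm (Fin n) => fun i => (lam (σ i) : ℝ)).subset
      fun _ ⟨σ, hσ⟩ => ⟨σ, hσ.symm⟩
  obtain ⟨f, u, hfu, hux⟩ := geometric_hahn_banach_closed_point (convex_convexHull ℝ _)
    (hfin.isClosed_convexHull (𝕜 := ℝ)) hx
  set c : Fin n → ℝ := fun i => f fun j => if i = j then 1 else 0
  have hf : ∀ y, f y = ∑ i, c i * y i := fun y => by
    rw [← f.coe_coe, LinearMap.pi_apply_eq_sum_univ]
    simp [c, mul_comm]
  obtain ⟨τ, hτ⟩ : ∃ τ : Equiv.Perm (Fin n), Antitone (c ∘ τ) :=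
    ⟨Tuple.sort (OrderDual.toDual ∘ c),
      monotone_toDual_comp_iff.1 (Tuple.monotone_sort (OrderDual.toDual ∘ c))⟩
  have hvert := hfu _ (subset_convexHull ℝ _ ⟨τ.symm, rfl⟩)
  rw [hf] at hvert hux
  linarith [sum_mul_le_sum_mul_of_forall_sum_le hτ hS htot]

lemma mem_permutahedron_iff (hlam : Antitone lam) {x : Fin n → ℝ} :
    x ∈ permutahedron n lam ↔
      (∀ S : Finset (Fin n), ∑ i ∈ S, x i ≤ ∑ k ∈ range #S, (lam k : ℝ)) ∧
        ∑ i, x i = ∑ k ∈ range n, (lam k : ℝ) :=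
  ⟨forall_sum_le_of_mem_permutahedron hlam, fun h => mem_permutahedron_of_forall_sum_le h.1 h.2⟩

end Permutahedron

lemma natCast_mem_permutahedron_iff {n : ℕ} {μ : YoungDiagram}
    (hlen : ∀ i, n ≤ i → μ.rowLen i = 0) (α : Fin n → ℕ) :
    (fun i => (α i : ℝ)) ∈ permutahedron n μ.rowLen ↔ μ.Dominates α := by
  rw [mem_permutahedron_iff fun _ _ => μ.rowLen_anti _ _, YoungDiagram.Dominates,
    ← μ.rowLenSum_eq_card hlen]
  simp only [YoungDiagram.rowLenSum, ← Nat.cast_sum, Nat.cast_le, Nat.cast_inj]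

lemma exists_mem_support_schur_iff (μ : YoungDiagram) (n : ℕ) (α : Fin n → ℕ) :
    (∃ β ∈ (schur μ n).support, ∀ i, β i = α i) ↔ μ.Dominates α := by
  refine ⟨fun ⟨β, hβ, hβα⟩ => funext hβα ▸ (mem_support_schur_iff μ n β).1 hβ, fun h => ?_⟩
  refine ⟨Finsupp.equivFunOnFinite.symm α, (mem_support_schur_iff μ n _).2 ?_, fun i => rfl⟩
  simpa using h

/-- every Schur polynomial `s_lam(x_1,…,x_n)` (with `ℓ(lam) ≤ n`) is SNP,
and its Newton polytope is the permutahedron `P_lam`. -/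
theorem stmt2 (n : ℕ) (lam : YoungDiagram) (hlen : ∀ i, n ≤ i → lam.rowLen i = 0) :
    SNP (schur lam n) ∧ newtonPolytope (schur lam n) = permutahedron n lam.rowLen := by
  have hsupp : ∀ α : Fin n → ℕ, (∃ β ∈ (schur lam n).support, ∀ i, β i = α i) ↔
      (fun i => (α i : ℝ)) ∈ permutahedron n lam.rowLen := fun α => by
    rw [exists_mem_support_schur_iff, natCast_mem_permutahedron_iff hlen]
  have hNewton : newtonPolytope (schur lam n) = permutahedron n lam.rowLen := by
    refine le_antisymm (convexHull_min ?_ (convex_convexHull ℝ _))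
      (convexHull_min ?_ (convex_convexHull ℝ _))
    · rintro _ ⟨β, hβ, rfl⟩
      exact (hsupp β).1 ⟨β, hβ, fun _ => rfl⟩
    · rintro _ ⟨σ, rfl⟩
      obtain ⟨β, hβ, hβσ⟩ :=
        (hsupp fun i => lam.rowLen (σ i)).2 (subset_convexHull ℝ _ ⟨σ, rfl⟩)
      exact subset_convexHull ℝ _ ⟨β, hβ, funext fun i => by simp [hβσ]⟩
  exact ⟨fun α => by rw [hNewton, hsupp], hNewton⟩
end

section
/- If β is a refinement of the composition α (both compositions of n), and γ is any composition of N with n parts, then the meld γ|_β is dominated by the meld γ|_α, i.e. every partial sum obtainable from γ|_α is at least the corresponding partial sum of γ|_β; consequently sort(γ|_β) ⊴ sort(γ|_α) in the dominance order on partitions of N. -/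
/-! If `β` refines `α` along block boundaries `t`, then each part of `γ|_α` is the sum of the
parts `t k, …, t (k+1) - 1` of `γ|_β`; in particular partial sums of `γ|_α` are the partial sums
of `γ|_β` at the indices `t k`. For dominance, the sum of the `k` largest parts of a composition
is the largest sum of at most `k` of its parts: choose such parts of `γ|_β` realising it and
replace each by the whole `α`-block containing it; at most `k` blocks arise, and their sum is at
least as large. -/

open Finset

/-- `mu` is dominated by `lam`: every partial sum of `mu` is at most that of `lam`. -/
def Dominated (mu lam : ℕ → ℕ) : Prop :=
  ∀ k : ℕ, ∑ i ∈ Finset.range k, mu i ≤ ∑ i ∈ Finset.range k, lam i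

/-- The first `ℓ` values of `c` sorted into weakly decreasing order (padded by zeros):
the partition obtained by sorting the composition `(c 0, …, c (ℓ-1))`. -/
noncomputable def sortPart (c : ℕ → ℕ) (ℓ : ℕ) : ℕ → ℕ := fun i =>
  (Multiset.sort ((Finset.range ℓ).val.map c) (· ≥ ·)).getD i 0

/-- `α` is a composition of `n` with `ℓ` parts: positive parts `α 0, …, α (ℓ-1)` summing
to `n` (and `0` beyond). -/
def IsComposition (α : ℕ → ℕ) (ℓ n : ℕ) : Prop :=
  (∀ i < ℓ, 0 < α i) ∧ (∀ i, ℓ ≤ i → α i = 0) ∧ ∑ i ∈ Finset.range ℓ, α i = n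

/-- The meld `γ|_α`: its `k`-th part is the sum of `γ` over the `k`-th consecutive block
of size `α k`. -/
def meld (γ α : ℕ → ℕ) (k : ℕ) : ℕ :=
  ∑ i ∈ Finset.Ico (∑ j ∈ Finset.range k, α j) (∑ j ∈ Finset.range (k + 1), α j), γ i

/-- `β` (with `ℓβ` parts) is a refinement of `α` (with `ℓα` parts): each part of `α` is
the sum of a consecutive run of parts of `β`. -/
def Refines (β : ℕ → ℕ) (ℓβ : ℕ) (α : ℕ → ℕ) (ℓα : ℕ) : Prop :=
  ∃ t : ℕ → ℕ, Monotone t ∧ t 0 = 0 ∧ (∀ k, ℓα ≤ k → t k = ℓβ) ∧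
    ∀ k, α k = ∑ j ∈ Finset.Ico (t k) (t (k + 1)), β j

lemma sum_Ico_sum_Ico_of_monotone {M : Type*} [AddCommMonoid M] {t : ℕ → ℕ} (ht : Monotone t)
    (c : ℕ → M) {a b : ℕ} (hab : a ≤ b) :
    ∑ k ∈ Ico a b, ∑ j ∈ Ico (t k) (t (k + 1)), c j = ∑ j ∈ Ico (t a) (t b), c j := by
  induction b, hab using Nat.le_induction with
  | base => simp
  | succ b hab ih =>
    rw [sum_Ico_succ_top hab, ih, sum_Ico_consecutive _ (ht hab) (ht b.le_succ)]

lemma sum_range_sum_Ico_of_monotone {M : Type*} [AddCommMonoid M] {t : ℕ → ℕ} (ht : Monotone t)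
    (ht0 : t 0 = 0) (c : ℕ → M) (m : ℕ) :
    ∑ k ∈ range m, ∑ j ∈ Ico (t k) (t (k + 1)), c j = ∑ j ∈ range (t m), c j := by
  simpa only [ht0, range_eq_Ico] using sum_Ico_sum_Ico_of_monotone ht c m.zero_le

lemma exists_mem_Ico_of_lt {t : ℕ → ℕ} {i : ℕ} (h0 : t 0 ≤ i) {m : ℕ} (hm : i < t m) :
    ∃ j < m, i ∈ Ico (t j) (t (j + 1)) := by
  induction m with
  | zero => omega
  | succ m ih =>
    by_cases him : i < t m
    · obtain ⟨j, hj, hij⟩ := ih him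
      exact ⟨j, by omega, hij⟩
    · exact ⟨m, m.lt_succ_self, mem_Ico.mpr ⟨not_lt.mp him, hm⟩⟩

lemma sum_range_getD_eq_sum_take (L : List ℕ) (k : ℕ) :
    ∑ i ∈ range k, L.getD i 0 = (L.take k).sum := by
  induction k with
  | zero => simp
  | succ m ih =>
    rw [sum_range_succ, ih, List.take_add_one, List.sum_append, List.getD_eq_getElem?_getD]
    cases L[m]? <;> simp

lemma sum_take_le_sum_take_cons {a : ℕ} {L : List ℕ} (ha : ∀ x ∈ L, x ≤ a) (n : ℕ) :
    (L.take n).sum ≤ ((a :: L).take n).sum := by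
  cases n with
  | zero => simp
  | succ m =>
    rw [List.take_succ_cons, List.sum_cons, List.take_add_one, List.sum_append, add_comm]
    gcongr
    cases h : L[m]? with
    | none => simp
    | some x => simpa using ha x (List.mem_of_getElem? h)

lemma sum_le_sum_take_of_sublist {l L : List ℕ} (h : l.Sublist L) (hL : L.Pairwise (· ≥ ·)) :
    l.sum ≤ (L.take l.length).sum := by
  induction h with
  | slnil => simp
  | cons a _ ih =>
    rw [List.pairwise_cons] at hL
    exact (ih hL.2).trans (sum_take_le_sum_take_cons hL.1 _)
  | cons_cons a _ ih =>
    simpa using ih (List.pairwise_cons.mp hL).2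

lemma sum_le_sum_take_of_subperm {l L : List ℕ} (h : l.Subperm L) (hL : L.Pairwise (· ≥ ·)) :
    l.sum ≤ (L.take l.length).sum := by
  obtain ⟨l', hperm, hsub⟩ := h
  rw [← hperm.sum_eq, ← hperm.length_eq]
  exact sum_le_sum_take_of_sublist hsub hL

lemma sum_range_sortPart (c : ℕ → ℕ) (ℓ k : ℕ) :
    ∑ i ∈ range k, sortPart c ℓ i =
      ((Multiset.sort ((range ℓ).val.map c) (· ≥ ·)).take k).sum :=
  sum_range_getD_eq_sum_take _ k

lemma sum_le_sum_range_sortPart (c : ℕ → ℕ) {ℓ k : ℕ} {S : Finset ℕ} (hS : S ⊆ range ℓ)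
    (hcard : #S ≤ k) : ∑ i ∈ S, c i ≤ ∑ i ∈ range k, sortPart c ℓ i := by
  set L := Multiset.sort ((range ℓ).val.map c) (· ≥ ·)
  have hsub : (S.val.map c).toList.Subperm L := by
    rw [← Multiset.coe_le, Multiset.coe_toList, Multiset.sort_eq]
    exact Multiset.map_le_map (val_le_iff.mpr hS)
  have hlen : (S.val.map c).toList.length = #S := by simp
  calc ∑ i ∈ S, c i = (S.val.map c).toList.sum := by rw [Multiset.sum_toList]; rfl
    _ ≤ (L.take #S).sum := hlen ▸ sum_le_sum_take_of_subperm hsub (Multiset.pairwise_sort _ _)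
    _ ≤ (L.take k).sum := List.Sublist.sum_le_sum (List.take_sublist_take_left hcard) (by simp)
    _ = ∑ i ∈ range k, sortPart c ℓ i := (sum_range_sortPart c ℓ k).symm

lemma exists_subset_sum_eq_sum_range_sortPart (c : ℕ → ℕ) (ℓ k : ℕ) :
    ∃ S ⊆ range ℓ, #S ≤ k ∧ ∑ i ∈ range k, sortPart c ℓ i = ∑ i ∈ S, c i := by
  set L := Multiset.sort ((range ℓ).val.map c) (· ≥ ·)
  have hperm : L.Perm ((List.range ℓ).map c) :=
    Quotient.exact (Multiset.sort_eq ((range ℓ).val.map c) _)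
  obtain ⟨l, hl, hsub⟩ := (List.take_sublist k L).subperm.trans hperm.subperm
  obtain ⟨u, hu, rfl⟩ := List.sublist_map_iff.mp hsub
  refine ⟨⟨u, hu.nodup List.nodup_range⟩, fun i hi => ?_, ?_, ?_⟩
  · exact mem_range.mpr (List.mem_range.mp (hu.subset hi))
  · exact (List.length_map c ▸ hl.length_eq).trans_le (List.length_take_le k L)
  · rw [sum_range_sortPart, ← hl.sum_eq]
    rfl

theorem dominated_sortPart_of_blocks {c c' t : ℕ → ℕ} {ℓ ℓ' : ℕ} (ht0 : t 0 = 0)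
    (htℓ : ℓ ≤ t ℓ') (hc' : ∀ k, c' k = ∑ j ∈ Ico (t k) (t (k + 1)), c j) :
    Dominated (sortPart c ℓ) (sortPart c' ℓ') := by
  intro k
  obtain ⟨S, hSℓ, hSk, hS⟩ := exists_subset_sum_eq_sum_range_sortPart c ℓ k
  have hblock : ∀ i ∈ S, ∃ j < ℓ', i ∈ Ico (t j) (t (j + 1)) := fun i hi =>
    exists_mem_Ico_of_lt (ht0.le.trans i.zero_le) ((mem_range.mp (hSℓ hi)).trans_le htℓ)
  choose! b hbℓ hb using hblock
  have hK : S.image b ⊆ range ℓ' := by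
    simpa [image_subset_iff] using hbℓ
  calc ∑ i ∈ range k, sortPart c ℓ i
      = ∑ j ∈ S.image b, ∑ i ∈ S with b i = j, c i :=
        hS.trans (sum_fiberwise_of_maps_to (fun i hi => mem_image_of_mem b hi) c).symm
    _ ≤ ∑ j ∈ S.image b, c' j := by
        refine sum_le_sum fun j _ => (hc' j).symm ▸ sum_le_sum_of_subset fun i hi => ?_
        obtain ⟨hiS, rfl⟩ := mem_filter.mp hi
        exact hb i hiS
    _ ≤ ∑ i ∈ range k, sortPart c' ℓ' i :=
        sum_le_sum_range_sortPart c' hK (card_image_le.trans hSk)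

lemma sum_Ico_meld (γ α : ℕ → ℕ) {a b : ℕ} (hab : a ≤ b) :
    ∑ k ∈ Ico a b, meld γ α k = ∑ i ∈ Ico (∑ j ∈ range a, α j) (∑ j ∈ range b, α j), γ i :=
  sum_Ico_sum_Ico_of_monotone (fun _ _ h => sum_le_sum_of_subset (range_subset_range.mpr h)) γ hab

lemma meld_eq_sum_Ico_meld {α β t : ℕ → ℕ} (ht : Monotone t) (ht0 : t 0 = 0)
    (hα : ∀ k, α k = ∑ j ∈ Ico (t k) (t (k + 1)), β j) (γ : ℕ → ℕ) (k : ℕ) :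
    meld γ α k = ∑ j ∈ Ico (t k) (t (k + 1)), meld γ β j := by
  have hsum (k : ℕ) : ∑ j ∈ range k, α j = ∑ j ∈ range (t k), β j := by
    simp only [hα]
    exact sum_range_sum_Ico_of_monotone ht ht0 β k
  rw [sum_Ico_meld γ β (ht k.le_succ), ← hsum, ← hsum]
  rfl

theorem stmt9_general (ℓα ℓβ : ℕ) (γ : ℕ → ℕ) (α β : ℕ → ℕ)
    (href : Refines β ℓβ α ℓα) :
    (∀ k : ℕ, ∃ k' : ℕ,
        ∑ j ∈ Finset.range k, meld γ α j = ∑ j ∈ Finset.range k', meld γ β j) ∧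
      Dominated (sortPart (meld γ β) ℓβ) (sortPart (meld γ α) ℓα) := by
  obtain ⟨t, ht, ht0, htℓ, hα⟩ := href
  have hmeld := meld_eq_sum_Ico_meld ht ht0 hα γ
  refine ⟨fun k => ⟨t k, ?_⟩, dominated_sortPart_of_blocks ht0 (htℓ ℓα le_rfl).ge hmeld⟩
  simp only [hmeld]
  exact sum_range_sum_Ico_of_monotone ht ht0 (meld γ β) k

/-- if `β` refines `α`, then every partial sum of the meld `γ|_α` is also a
partial sum of `γ|_β` (hence is at least the corresponding partial sum of `γ|_β`), and
consequently `sort(γ|_β) ⊴ sort(γ|_α)` in the dominance order on partitions of `N`. -/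
theorem stmt9 (N n ℓα ℓβ : ℕ)
    (γ : ℕ → ℕ) (hγ0 : ∀ i, n ≤ i → γ i = 0) (hγsum : ∑ i ∈ Finset.range n, γ i = N)
    (α β : ℕ → ℕ) (hα : IsComposition α ℓα n) (hβ : IsComposition β ℓβ n)
    (href : Refines β ℓβ α ℓα) :
    (∀ k : ℕ, ∃ k' : ℕ,
        ∑ j ∈ Finset.range k, meld γ α j = ∑ j ∈ Finset.range k', meld γ β j) ∧
      Dominated (sortPart (meld γ β) ℓβ) (sortPart (meld γ α) ℓα) :=
  stmt9_general ℓα ℓβ γ α β href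
end

section
/- For n ≥ 3, the number of permutations in the subset S_{{1,2}} · S_{{2,3}} ⋯ S_{{n-1,n}} of S_n (products σ_1 σ_2 ⋯ σ_{n-1} where σ_i ∈ {id, (i, i+1)}) having no fixed points is at least n − 2. -/
/-! Dropping the `k`-th transposition `(k, k+1)` (for `k = m`, none) splits the long cycle
`0 ↦ 1 ↦ ⋯ ↦ m ↦ 0` into the cycles `(0 ⋯ k)(k+1 ⋯ m)`. These are fixed-point-free exactly
when neither has length one, i.e. `k ≠ 0` and `k ≠ m - 1`, and `k` is recovered as the
preimage of `0`, so they give `m - 1` distinct fixed-point-free products. -/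

open Finset

/-- The product `σ_1 σ_2 ⋯ σ_m` in `S_{m+1}`, where `σ_i` is the adjacent transposition
`(i, i+1)` if `ε i` is true and the identity otherwise. -/
def adjProd (m : ℕ) (ε : Fin m → Bool) : Equiv.Perm (Fin (m + 1)) :=
  ((List.finRange m).map fun i => if ε i then Equiv.swap i.castSucc i.succ else 1).prod

theorem Fin.swap_castSucc_succ_apply_val {m : ℕ} (i : Fin m) (x : Fin (m + 1)) :
    (Equiv.swap i.castSucc i.succ x : ℕ) =
      if (x : ℕ) = i then (i : ℕ) + 1 else if (x : ℕ) = (i : ℕ) + 1 then (i : ℕ) else x := by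
  rw [Equiv.swap_apply_def]
  split_ifs <;> simp_all [Fin.ext_iff]

def adjProdOmit (m k : ℕ) : Equiv.Perm (Fin (m + 1)) :=
  adjProd m fun i => decide ((i : ℕ) ≠ k)

theorem adjProdOmit_drop_apply_val {m k : ℕ} (hk : k ≤ m) (d : ℕ) :
    ∀ t, t + d = m → ∀ x : Fin (m + 1),
      ((((List.finRange m).drop t).map fun i : Fin m =>
          if decide ((i : ℕ) ≠ k) then Equiv.swap i.castSucc i.succ else 1).prod x : ℕ) =
        if (x : ℕ) < t then (x : ℕ) else if (x : ℕ) = k then t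
        else if (x : ℕ) = m then (if t ≤ k then k + 1 else t) else (x : ℕ) + 1 := by
  induction d with
  | zero =>
    rintro t rfl x
    rw [List.drop_eq_nil_of_le (by simp)]
    simp only [List.map_nil, List.prod_nil, Equiv.Perm.coe_one, id_eq]
    have := x.is_le
    split_ifs <;> omega
  | succ d ih =>
    intro t htd x
    have ht : t < m := by omega
    rw [List.drop_eq_getElem_cons (by simpa using ht)]
    simp only [List.map_cons, List.prod_cons, List.getElem_finRange, Fin.cast_mk,
      Equiv.Perm.mul_apply]
    have := x.is_le
    by_cases htk : t = k
    · subst htk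
      simp only [ne_eq, not_true_eq_false, decide_false, Bool.false_eq_true, if_false,
        Equiv.Perm.one_apply, ih (t + 1) (by omega) x]
      split_ifs <;> omega
    · simp only [ne_eq, htk, not_false_eq_true, decide_true, if_true]
      rw [Fin.swap_castSucc_succ_apply_val, ih (t + 1) (by omega)]
      dsimp only
      split_ifs <;> omega

theorem adjProdOmit_apply_val {m k : ℕ} (hk : k ≤ m) (x : Fin (m + 1)) :
    (adjProdOmit m k x : ℕ) = if (x : ℕ) = k then 0 else if (x : ℕ) = m then k + 1 else x + 1 := by
  have h := adjProdOmit_drop_apply_val hk m 0 (zero_add m) x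
  rw [List.drop_zero] at h
  rw [adjProdOmit, adjProd, h]
  have := x.isLt
  split_ifs <;> omega

theorem adjProdOmit_apply_ne_self {m k : ℕ} (hk : k ≤ m) (hk0 : k ≠ 0) (hkm : k + 1 ≠ m)
    (x : Fin (m + 1)) : adjProdOmit m k x ≠ x := by
  intro hfix
  have h := adjProdOmit_apply_val hk x
  rw [hfix] at h
  split_ifs at h <;> omega

theorem adjProdOmit_injOn (m : ℕ) : Set.InjOn (adjProdOmit m) (Set.Iic m) := by
  intro k hk k' hk' heq
  have h := adjProdOmit_apply_val (m := m) hk' ⟨k, Nat.lt_succ_of_le hk⟩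
  rw [← heq, adjProdOmit_apply_val hk] at h
  split_ifs at h <;> simp_all

/-- for `n = m + 1 ≥ 3`, at least `n - 2` of the permutations arising as
products `σ_1 ⋯ σ_{n-1}` with `σ_i ∈ {id, (i, i+1)}` are fixed-point-free. -/
theorem stmt10 (m : ℕ) (hm : 2 ≤ m) :
    m - 1 ≤
      ((Finset.univ.image (adjProd m)).filter fun π => ∀ i, π i ≠ i).card := by
  have hcard : (insert m (Icc 1 (m - 2))).card = m - 1 := by
    rw [card_insert_of_notMem (by rw [mem_Icc]; omega), Nat.card_Icc]
    omega
  rw [← hcard]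
  refine card_le_card_of_injOn (adjProdOmit m) (fun k hk => ?_)
    ((adjProdOmit_injOn m).mono fun k hk => ?_)
  all_goals simp only [coe_insert, coe_Icc, Set.mem_insert_iff, Set.mem_Icc] at hk
  · simp only [coe_filter, Set.mem_ofPred_eq, mem_image, mem_univ, true_and]
    exact ⟨⟨_, rfl⟩, adjProdOmit_apply_ne_self (by omega) (by omega) (by omega)⟩
  · simp only [Set.mem_Iic]
    omega
end

section
/- Let λ/μ be a skew partition of size d with ℓ(λ) = n. The permanent of the Jacobi–Trudi matrix H(λ,μ) = (h_{(λ_i−i)−(μ_j−j)})_{i,j=1}^n, viewed as a polynomial in finitely many variables x_1,...,x_m, has the same support as the Schur polynomial s_{(d)}(x_1,...,x_m) = h_d(x_1,...,x_m); in particular per H(λ,μ) has a saturated Newton polytope equal to the permutahedron P_{(d)}. -/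
open Finset

/-- The complete homogeneous symmetric polynomial `h_k(x_1, …, x_m)`: the sum of all
monomials of total degree `k`. -/
noncomputable def hpoly (m k : ℕ) : MvPolynomial (Fin m) ℝ :=
  ∑ α ∈ Finset.Nat.antidiagonalTuple m k, ∏ i, MvPolynomial.X i ^ α i

/-- `h_k` for an integer index: `0` when `k < 0`. -/
noncomputable def hz (m : ℕ) (k : ℤ) : MvPolynomial (Fin m) ℝ :=
  if 0 ≤ k then hpoly m k.toNat else 0

/-- The permanent of a square matrix. -/
noncomputable def permanent {n : ℕ} {R : Type*} [CommSemiring R]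
    (A : Matrix (Fin n) (Fin n) R) : R :=
  ∑ π : Equiv.Perm (Fin n), ∏ i, A i (π i)

/-!
Every entry of the Jacobi–Trudi matrix is an `h_k` with nonnegative coefficients, and along any
permutation the indices sum to `d`, so each term of the permanent is zero or homogeneous of degree
`d`. The diagonal term `∏ h_{λ_i - μ_i}` contains every monomial of degree `d`, and with no
cancellation possible the support is exactly that of `h_d`. The Newton polytope of a polynomial
with this support is the dilated simplex `{v ≥ 0, ∑ v = d}`, whose lattice points are exactly the
exponent vectors of degree `d`, and which is also the permutahedron of the one-row partition `(d)`.
-/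

open MvPolynomial

section NonnegCoeff

variable {σ R : Type*} [CommSemiring R] [PartialOrder R] [IsOrderedRing R]

theorem MvPolynomial.coeff_prod_nonneg {ι : Type*} (s : Finset ι) (f : ι → MvPolynomial σ R)
    (hf : ∀ i ∈ s, ∀ β, 0 ≤ coeff β (f i)) (β : σ →₀ ℕ) : 0 ≤ coeff β (∏ i ∈ s, f i) := by
  classical
  revert β
  refine Finset.prod_induction f (fun p => ∀ β, 0 ≤ coeff β p) (fun p q hp hq β => ?_)
    (fun β => ?_) hf
  · rw [coeff_mul]
    exact Finset.sum_nonneg fun x _ => mul_nonneg (hp _) (hq _)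
  · rw [coeff_one]
    split_ifs <;> simp

theorem MvPolynomial.coeff_mul_coeff_le_coeff_add_mul {f g : MvPolynomial σ R}
    (hf : ∀ β, 0 ≤ coeff β f) (hg : ∀ β, 0 ≤ coeff β g) (γ δ : σ →₀ ℕ) :
    coeff γ f * coeff δ g ≤ coeff (γ + δ) (f * g) := by
  classical
  rw [coeff_mul]
  exact Finset.single_le_sum (f := fun p => coeff p.1 f * coeff p.2 g) (a := (γ, δ))
    (fun p _ => mul_nonneg (hf _) (hg _)) (Finset.HasAntidiagonal.mem_antidiagonal.mpr rfl)

end NonnegCoeff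

section CompleteHomogeneous

variable {m : ℕ}

theorem coeff_hpoly (k : ℕ) (β : Fin m →₀ ℕ) :
    coeff β (hpoly m k) = if β.degree = k then 1 else 0 := by
  have hX : ∀ α : Fin m → ℕ,
      ∏ i, (X i : MvPolynomial (Fin m) ℝ) ^ α i = monomial (Finsupp.equivFunOnFinite.symm α) 1 :=
    fun α => by rw [monomial_eq, C_1, one_mul, Finsupp.prod_fintype] <;> simp
  simp_rw [hpoly, coeff_sum, hX, coeff_monomial, Equiv.symm_apply_eq]
  rw [Finset.sum_ite_eq']
  simp [Finset.Nat.mem_antidiagonalTuple, Finsupp.degree_eq_sum]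

theorem mem_support_hpoly {k : ℕ} {β : Fin m →₀ ℕ} : β ∈ (hpoly m k).support ↔ β.degree = k := by
  rw [mem_support_iff, coeff_hpoly]
  split_ifs with h <;> simp [h]

theorem coeff_hpoly_nonneg (k : ℕ) (β : Fin m →₀ ℕ) : 0 ≤ coeff β (hpoly m k) := by
  rw [coeff_hpoly]
  split_ifs <;> norm_num

theorem isHomogeneous_hpoly (k : ℕ) : (hpoly m k).IsHomogeneous k := by
  intro β hβ
  rw [Pi.one_def, ← Finsupp.degree_eq_weight_one]
  exact mem_support_hpoly.mp (mem_support_iff.mpr hβ)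

theorem coeff_prod_hpoly_pos {ι : Type*} (s : Finset ι) (k : ι → ℕ) {β : Fin m →₀ ℕ}
    (hβ : β.degree = ∑ i ∈ s, k i) : 0 < coeff β (∏ i ∈ s, hpoly m (k i)) := by
  classical
  induction s using Finset.induction_on generalizing β with
  | empty =>
    rw [Finset.sum_empty, Finsupp.degree_eq_zero_iff] at hβ
    simp [hβ]
  | insert a s ha ih =>
    rw [Finset.sum_insert ha] at hβ
    rw [Finset.prod_insert ha]
    obtain ⟨γ, hγβ, hγ⟩ := Finsupp.exists_le_degree_eq β (k a) (by omega)
    have hsplit : γ + (β - γ) = β := add_tsub_cancel_of_le hγβ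
    have hrest : (β - γ).degree = ∑ i ∈ s, k i := by
      have := congrArg Finsupp.degree hsplit
      rw [map_add] at this
      omega
    rw [← hsplit]
    refine lt_of_lt_of_le (mul_pos ?_ (ih hrest)) (coeff_mul_coeff_le_coeff_add_mul
      (coeff_hpoly_nonneg _) (coeff_prod_nonneg _ _ (fun i _ => coeff_hpoly_nonneg _)) _ _)
    simp [coeff_hpoly, hγ]

end CompleteHomogeneous

section JacobiTrudi

variable {m : ℕ}

theorem hz_natCast (k : ℕ) : hz m k = hpoly m k := by
  simp [hz]

theorem coeff_hz_nonneg (k : ℤ) (β : Fin m →₀ ℕ) : 0 ≤ coeff β (hz m k) := by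
  unfold hz
  split_ifs
  · exact coeff_hpoly_nonneg _ _
  · simp

theorem isHomogeneous_prod_hz {ι : Type*} [Fintype ι] (k : ι → ℤ) {d : ℕ}
    (hk : ∑ i, k i = d) : (∏ i, hz m (k i)).IsHomogeneous d := by
  by_cases hpos : ∀ i, 0 ≤ k i
  · lift k to ι → ℕ using hpos
    simp only [hz_natCast]
    simp only at hk
    rw [← show ∑ i, k i = d by exact_mod_cast hk]
    exact IsHomogeneous.prod _ _ _ fun i _ => isHomogeneous_hpoly _
  · push Not at hpos
    obtain ⟨i, hi⟩ := hpos
    rw [Finset.prod_eq_zero (Finset.mem_univ i) (if_neg hi.not_ge)]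
    exact isHomogeneous_zero _ _ _

theorem sum_sub_comp_perm {ι G : Type*} [Fintype ι] [AddCommGroup G] (a b : ι → G)
    (π : Equiv.Perm ι) : ∑ i, (a i - b (π i)) = ∑ i, (a i - b i) := by
  simp only [Finset.sum_sub_distrib, Equiv.sum_comp]

theorem support_permanent_hz {n d : ℕ} (a b : Fin n → ℤ) (hab : ∀ i, b i ≤ a i)
    (hd : ∑ i, (a i - b i) = d) :
    (permanent (Matrix.of fun i j => hz m (a i - b j))).support = (hpoly m d).support := by
  set P := permanent (Matrix.of fun i j => hz m (a i - b j))
  have hhom : P.IsHomogeneous d := IsHomogeneous.sum _ _ _ fun π _ =>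
    isHomogeneous_prod_hz _ ((sum_sub_comp_perm a b π).trans hd)
  obtain ⟨c, hc⟩ : ∃ c : Fin n → ℕ, ∀ i, a i - b i = c i :=
    ⟨fun i => (a i - b i).toNat, fun i => (Int.toNat_of_nonneg (sub_nonneg.mpr (hab i))).symm⟩
  have hcd : ∑ i, c i = d := by
    simp only [hc] at hd
    exact_mod_cast hd
  ext β
  rw [mem_support_hpoly]
  refine ⟨fun hβ => ?_, fun hβ => ?_⟩
  · by_contra hne
    exact mem_support_iff.mp hβ (hhom.coeff_eq_zero hne)
  · have hdiag : 0 < coeff β (∏ i, hz m (a i - b (Equiv.refl _ i))) := by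
      simpa only [Equiv.refl_apply, hc, hz_natCast] using
        coeff_prod_hpoly_pos Finset.univ c (hβ.trans hcd.symm)
    refine mem_support_iff.mpr (lt_of_lt_of_le hdiag ?_).ne'
    rw [show P = ∑ π : Equiv.Perm (Fin n), ∏ i, hz m (a i - b (π i)) from rfl, coeff_sum]
    exact Finset.single_le_sum
      (f := fun π : Equiv.Perm (Fin n) => coeff β (∏ i, hz m (a i - b (π i))))
      (fun π _ => coeff_prod_nonneg _ _ (fun i _ => coeff_hz_nonneg _) β) (Finset.mem_univ _)

end JacobiTrudi

open scoped Pointwise in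
theorem convexHull_range_single_eq {ι : Type*} [Fintype ι] [DecidableEq ι] [Nonempty ι] {d : ℝ}
    (hd : 0 ≤ d) :
    convexHull ℝ (Set.range fun j : ι => Pi.single j d) =
      {v : ι → ℝ | (∀ i, 0 ≤ v i) ∧ ∑ i, v i = d} := by
  have hrange : (Set.range fun j : ι => Pi.single j d) =
      d • Set.range fun j : ι => Pi.single j (1 : ℝ) := by
    rw [Set.smul_set_range]
    simp [← Pi.single_smul']
  rw [hrange, convexHull_smul, convexHull_rangle_single_eq_stdSimplex]
  ext v
  rcases hd.eq_or_lt with rfl | hpos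
  · rw [Set.zero_smul_set ⟨_, single_mem_stdSimplex ℝ (Classical.arbitrary ι)⟩, Set.mem_zero,
      Set.mem_ofPred_eq]
    refine ⟨fun hv => by simp [hv], fun ⟨hv, hsum⟩ => funext fun i => ?_⟩
    exact (Finset.sum_eq_zero_iff_of_nonneg fun i _ => hv i).mp hsum i (Finset.mem_univ i)
  · rw [Set.mem_smul_set_iff_inv_smul_mem₀ hpos.ne']
    simp only [stdSimplex, Set.mem_ofPred_eq, Pi.smul_apply, smul_eq_mul, ← Finset.mul_sum,
      mul_nonneg_iff_of_pos_left (inv_pos.mpr hpos), inv_mul_eq_one₀ hpos.ne', eq_comm]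

theorem permutahedron_row {m : ℕ} [NeZero m] (d : ℕ) :
    permutahedron m (fun i => if i = 0 then d else 0) =
      convexHull ℝ (Set.range fun j : Fin m => Pi.single j (d : ℝ)) := by
  have hvertex : ∀ σ : Equiv.Perm (Fin m),
      (fun i => (((if (σ i : ℕ) = 0 then d else 0 : ℕ)) : ℝ)) = Pi.single (σ.symm 0) (d : ℝ) := by
    intro σ
    funext i
    simp only [Pi.single_apply, Fin.val_eq_zero_iff, Equiv.eq_symm_apply]
    split_ifs <;> simp
  unfold permutahedron
  congr 1
  ext v
  simp only [Set.mem_ofPred_eq, Set.mem_range]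
  constructor
  · rintro ⟨σ, rfl⟩
    exact ⟨σ.symm 0, (hvertex σ).symm⟩
  · rintro ⟨j, rfl⟩
    exact ⟨Equiv.swap j 0, by rw [hvertex, Equiv.symm_swap, Equiv.swap_apply_right]⟩

theorem newtonPolytope_eq_of_support_eq_hpoly {m d : ℕ} [NeZero m] {f : MvPolynomial (Fin m) ℝ}
    (hf : f.support = (hpoly m d).support) :
    newtonPolytope f = {v : Fin m → ℝ | (∀ i, 0 ≤ v i) ∧ ∑ i, v i = d} := by
  unfold newtonPolytope
  rw [← convexHull_range_single_eq (Nat.cast_nonneg d)]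
  refine subset_antisymm (convexHull_min ?_ (convex_convexHull ℝ _)) (convexHull_mono ?_)
  · rintro _ ⟨α, hα, rfl⟩
    rw [hf, mem_support_hpoly, Finsupp.degree_eq_sum] at hα
    rw [convexHull_range_single_eq (Nat.cast_nonneg d)]
    exact ⟨fun i => Nat.cast_nonneg _, by rw [← hα, Nat.cast_sum]⟩
  · rintro _ ⟨j, rfl⟩
    refine ⟨Finsupp.single j d, by rw [hf, mem_support_hpoly, Finsupp.degree_single], ?_⟩
    funext i
    simp [Pi.single_apply, Finsupp.single_apply, eq_comm]

theorem snp_of_support_eq_hpoly {m d : ℕ} [NeZero m] {f : MvPolynomial (Fin m) ℝ}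
    (hf : f.support = (hpoly m d).support) : SNP f := by
  intro α
  simp only [newtonPolytope_eq_of_support_eq_hpoly hf, Set.mem_ofPred_eq, hf, mem_support_hpoly,
    Finsupp.degree_eq_sum]
  constructor
  · rintro ⟨-, h⟩
    exact ⟨Finsupp.equivFunOnFinite.symm α, by exact_mod_cast h, fun i => rfl⟩
  · rintro ⟨β, hβ, hβα⟩
    refine ⟨fun i => Nat.cast_nonneg _, ?_⟩
    simp_rw [← hβα]
    exact_mod_cast hβ

theorem stmt12_general (m n d : ℕ) (hm : 0 < m) (lam mu : Fin n → ℕ)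
    (hle : ∀ i, mu i ≤ lam i)
    (hd : ∑ i, (lam i - mu i) = d)
    (A : Matrix (Fin n) (Fin n) (MvPolynomial (Fin m) ℝ))
    (hA : A = Matrix.of fun i j =>
      hz m (((lam i : ℤ) - (i : ℕ)) - ((mu j : ℤ) - (j : ℕ)))) :
    (permanent A).support = (hpoly m d).support ∧ SNP (permanent A) ∧
      newtonPolytope (permanent A) =
        permutahedron m (fun i => if i = 0 then d else 0) := by
  have : NeZero m := ⟨hm.ne'⟩
  have hsupp : (permanent A).support = (hpoly m d).support := by
    subst hA
    refine support_permanent_hz (fun i => (lam i : ℤ) - (i : ℕ)) (fun j => (mu j : ℤ) - (j : ℕ))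
      (fun i => by have := hle i; omega) ?_
    rw [← hd]
    push_cast [Nat.cast_sub (hle _)]
    exact Finset.sum_congr rfl fun i _ => by ring
  refine ⟨hsupp, snp_of_support_eq_hpoly hsupp, ?_⟩
  rw [newtonPolytope_eq_of_support_eq_hpoly hsupp, permutahedron_row,
    convexHull_range_single_eq (Nat.cast_nonneg _)]

/-- for a skew partition `lam/mu` of size `d` with `n` rows, the permanent of
the Jacobi–Trudi matrix `H(lam,mu) = (h_{(lam_i - i) - (mu_j - j)})`, in variables
`x_1, …, x_m`, has the same support as `h_d = s_{(d)}`; in particular it is SNP with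
Newton polytope the permutahedron `P_{(d)}`. -/
theorem stmt12 (m n d : ℕ) (hm : 0 < m) (lam mu : Fin n → ℕ)
    (hlam : Antitone lam) (hmu : Antitone mu) (hle : ∀ i, mu i ≤ lam i)
    (hd : ∑ i, (lam i - mu i) = d)
    (A : Matrix (Fin n) (Fin n) (MvPolynomial (Fin m) ℝ))
    (hA : A = Matrix.of fun i j =>
      hz m (((lam i : ℤ) - (i : ℕ)) - ((mu j : ℤ) - (j : ℕ)))) :
    (permanent A).support = (hpoly m d).support ∧ SNP (permanent A) ∧
      newtonPolytope (permanent A) =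
        permutahedron m (fun i => if i = 0 then d else 0) :=
  stmt12_general m n d hm lam mu hle hd A hA
end
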